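/- arXiv:2209.00848 — 5 statements merged into one kernel-verified Lean document; each statement's English description precedes it below -/
import Mathlib

section
/- There exist a rational point 𝐧 ∈ 𝐒¹_II ∩ ℚ² and a continuous bijection Φ : ℝ → 𝐒¹_II ∖ {𝐧} such that Φ maps √2ℚ onto (𝐒¹_II ∩ ℚ²) ∖ {𝐧} and, for every ξ ∈ ℝ ∖ √2ℚ, L_{(ℝ,√2ℚ)}(ξ) = 2 · L_{(𝐒¹_II, 𝐒¹_II∩ℚ²)}(Φ(ξ)). -/
open Filter
open scoped ENNReal

/-- The Lagrange number of `P` with respect to the set `Z` of "rational points" with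
height function `H`: the limsup, along the cofinite filter on `Z`, of
`1 / (H z * dist P z)`. -/
noncomputable def lagrangeNumber {X : Type*} [MetricSpace X] (Z : Set X) (H : X → ℝ)
    (P : X) : ℝ≥0∞ :=
  Filter.limsup (fun z : Z => ENNReal.ofReal (1 / (H z * dist P (z : X)))) Filter.cofinite

/-- The set `√2·ℚ ⊆ ℝ`. -/
def sqrt2Q : Set ℝ := {x | ∃ q : ℚ, x = Real.sqrt 2 * q}

/-- The height function on `√2·ℚ`: writing `r = √2·p/q₁` with `p/q₁` reduced, the height
is `q₁²` if `q₁` is odd, and `q₁²/2 (= 2(q₁/2)²)` if `q₁` is even. -/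
noncomputable def heightSqrt2Q (x : ℝ) : ℝ :=
  letI := Classical.dec (∃ q : ℚ, x = Real.sqrt 2 * q)
  if h : ∃ q : ℚ, x = Real.sqrt 2 * q then
    (if h.choose.den % 2 = 1 then ((h.choose.den : ℝ)) ^ 2 else ((h.choose.den : ℝ)) ^ 2 / 2)
  else 1

/-- Points of `ℝ^l` with all coordinates rational. -/
def ratPts (l : ℕ) : Set (EuclideanSpace ℝ (Fin l)) := {v | ∀ i, ∃ q : ℚ, v i = (q : ℝ)}

/-- The height of a rational point of a sphere: writing it as `𝐩/q` with `𝐩 ∈ ℤ^l`,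
`q ≥ 1`, `gcd(p₁,…,p_l,q) = 1`, the height is `q`, which equals the lcm of the
denominators of the rational coordinates. -/
noncomputable def heightVec {l : ℕ} (v : EuclideanSpace ℝ (Fin l)) : ℝ :=
  letI := Classical.dec (∀ i, ∃ q : ℚ, v i = (q : ℝ))
  if h : ∀ i, ∃ q : ℚ, v i = (q : ℝ) then
    ((Finset.univ.lcm fun i => (h i).choose.den : ℕ) : ℝ)
  else 1

/-- The circle `𝐒¹_II = {(x₁,x₂) ∈ ℝ² : x₁² + x₂² = 2}`. -/
def S1II : Set (EuclideanSpace ℝ (Fin 2)) := {v | v 0 ^ 2 + v 1 ^ 2 = 2}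

/-!
`S1II.param` is the inverse of the stereographic projection of `𝐒¹_II` from the rational point
`pole = (1, -1)`, scaled so that `√2ℚ` corresponds exactly to the other rational points. It is
conformal with factor `d = paramDenom`: `dist (param a) (param b) = 2|a - b| / √(d a · d b)`.
For `z = √2·p/q ∈ √2ℚ` in lowest terms, `param z = (2p² - q², -(2p² + 4pq + q²)) / C` with
`C = 2p² + 2pq + q²`; an elementary gcd computation shows that the numerators are coprime to `C`
when `q` is odd and share exactly the factor `2` with it when `q` is even, so that the height of
`param z` is `H(z) · d(z)` in both cases of the definition of `H`. Hence
`2 / (H(param z) · dist (param ξ) (param z)) = √(d ξ / d z) / (H(z) · |ξ - z|)`.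
Approximants at distance `≥ δ` from `ξ` do not affect the limsup, since only finitely many of
them have bounded height, and near `ξ` the factor `√(d ξ / d z)` tends to `1`.
-/

open Topology

theorem Function.Injective.map_cofinite_eq {α β : Type*} {f : α → β}
    (hf : Function.Injective f) (hrange : (Set.range f)ᶜ.Finite) :
    map f cofinite = cofinite := by
  refine le_antisymm hf.tendsto_cofinite fun s hs => ?_
  rw [mem_map, mem_cofinite] at hs
  rw [mem_cofinite]
  refine ((hs.image f).union hrange).subset fun b hb => ?_
  by_cases hbf : b ∈ Set.range f
  · obtain ⟨a, rfl⟩ := hbf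
    exact Or.inl ⟨a, hb, rfl⟩
  · exact Or.inr hbf

theorem Filter.limsup_eq_limsup_inf_comap_nhds {α X : Type*} [TopologicalSpace X] {l : Filter α}
    {φ : α → X} {x : X} {f : α → ℝ≥0∞}
    (hf : ∀ U ∈ 𝓝 x, Tendsto f (l ⊓ 𝓟 (φ ⁻¹' Uᶜ)) (𝓝 0)) :
    limsup f l = limsup f (l ⊓ comap φ (𝓝 x)) := by
  refine le_antisymm (le_of_forall_gt_imp_ge_of_dense fun b hb => ?_)
    (limsup_le_limsup_of_le inf_le_left)
  obtain ⟨s, hs, t, ⟨U, hU, hUt⟩, hst⟩ := mem_inf_iff_superset.1 (eventually_lt_of_limsup_lt hb)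
  have hfar := (hf U hU).eventually (gt_mem_nhds (pos_of_gt hb))
  rw [eventually_inf_principal] at hfar
  refine limsup_le_of_le (by isBoundedDefault) ?_
  filter_upwards [hs, hfar] with z hzs hzU
  by_cases hz : φ z ∈ U
  · exact (hst ⟨hzs, hUt hz⟩).le
  · exact (hzU hz).le

theorem ENNReal.limsup_mul_of_tendsto_one {α : Type*} {l : Filter α} {ρ f : α → ℝ≥0∞}
    (hρ : Tendsto ρ l (𝓝 1)) : limsup (ρ * f) l = limsup f l := by
  rcases l.eq_or_neBot with rfl | _
  · simp
  refine le_antisymm ?_ ?_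
  · calc limsup (ρ * f) l ≤ limsup ρ l * limsup f l :=
          ENNReal.limsup_mul_le' (by simp [hρ.limsup_eq]) (by simp [hρ.limsup_eq])
      _ = limsup f l := by rw [hρ.limsup_eq, one_mul]
  · calc limsup f l = limsup f l * liminf ρ l := by rw [hρ.liminf_eq, mul_one]
      _ ≤ limsup (f * ρ) l := ENNReal.le_limsup_mul
      _ = limsup (ρ * f) l := by rw [mul_comm]

theorem IsCoprime.of_combinations {R : Type*} [CommRing R] {a c x y p q r s : R}
    (h : IsCoprime x y) (hx : x = p * a + q * c) (hy : y = r * a + s * c) : IsCoprime a c := by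
  obtain ⟨u, v, huv⟩ := h
  exact ⟨u * p + v * r, u * q + v * s, by rw [← huv, hx, hy]; ring⟩

theorem Int.isCoprime_pow_four_mul_pow {a b : ℤ} (hab : IsCoprime a b) (hb : Odd b) (m n : ℕ) :
    IsCoprime (b ^ m) (4 * a ^ n) := by
  have h := ((Int.isCoprime_two_right.2 hb).pow_right (n := 2)).mul_right
    (hab.symm.pow_right (n := n))
  norm_num at h
  exact h.pow_left

theorem Int.isCoprime_two_sq_sub_sq {a b : ℤ} (hab : IsCoprime a b) (hb : Odd b) :
    IsCoprime (2 * a ^ 2 - b ^ 2) (2 * a ^ 2 + 2 * a * b + b ^ 2) :=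
  (Int.isCoprime_pow_four_mul_pow hab hb 3 4).of_combinations
    (p := a) (q := b - a) (r := 2 * a ^ 2 + b ^ 2 + a * b) (s := b * (b - a)) (by ring) (by ring)

theorem Int.isCoprime_two_sq_add_four_mul {a b : ℤ} (hab : IsCoprime a b) (hb : Odd b) :
    IsCoprime (2 * a ^ 2 + 4 * a * b + b ^ 2) (2 * a ^ 2 + 2 * a * b + b ^ 2) :=
  (Int.isCoprime_pow_four_mul_pow hab hb 3 3).of_combinations
    (p := -a - b) (q := a + 2 * b) (r := -2 * a - b) (s := 4 * a + b) (by ring) (by ring)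

theorem heightVec_eq_of_isCoprime {l : ℕ} [NeZero l] {v : EuclideanSpace ℝ (Fin l)}
    {p : Fin l → ℤ} {C : ℤ} (hC : 0 < C) (hp : ∀ i, IsCoprime (p i) C)
    (hv : ∀ i, v i = p i / C) : v ∈ ratPts l ∧ heightVec v = C := by
  have hvq : ∀ i, v i = ((p i / C : ℚ) : ℝ) := fun i => by rw [hv i]; push_cast; rfl
  have hrat : ∀ i, ∃ q : ℚ, v i = q := fun i => ⟨_, hvq i⟩
  refine ⟨hrat, ?_⟩
  have hden : ∀ i, (hrat i).choose.den = C.natAbs := fun i => by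
    rw [Rat.cast_injective ((hrat i).choose_spec.symm.trans (hvq i))]
    have := Rat.den_div_eq_of_coprime hC (Int.isCoprime_iff_gcd_eq_one.1 (hp i))
    omega
  have hlcm : (Finset.univ.lcm fun i => (hrat i).choose.den) = C.natAbs :=
    Nat.dvd_antisymm (Finset.lcm_dvd fun i _ => (hden i).dvd)
      (hden 0 ▸ Finset.dvd_lcm (Finset.mem_univ 0))
  unfold heightVec
  rw [dif_pos hrat, hlcm, Nat.cast_natAbs, Int.cast_abs, abs_of_pos (Int.cast_pos.2 hC)]

theorem heightSqrt2Q_sqrt2_mul (t : ℚ) : heightSqrt2Q (√2 * t) =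
    if t.den % 2 = 1 then (t.den : ℝ) ^ 2 else (t.den : ℝ) ^ 2 / 2 := by
  have hmem : ∃ q : ℚ, √2 * t = √2 * q := ⟨t, rfl⟩
  have hchoose : hmem.choose = t := by
    have := hmem.choose_spec
    exact_mod_cast (mul_left_cancel₀ (by positivity) this).symm
  unfold heightSqrt2Q
  rw [dif_pos hmem, hchoose]

theorem one_le_heightSqrt2Q (x : ℝ) : 1 ≤ heightSqrt2Q x := by
  by_cases hx : ∃ q : ℚ, x = √2 * q
  · obtain ⟨t, rfl⟩ := hx
    have hden : (1 : ℝ) ≤ t.den := by exact_mod_cast t.pos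
    rw [heightSqrt2Q_sqrt2_mul]
    split_ifs with hodd
    · nlinarith
    · have : (2 : ℝ) ≤ t.den := by exact_mod_cast (by have := t.pos; omega : 2 ≤ t.den)
      nlinarith
  · unfold heightSqrt2Q
    rw [dif_neg hx]

theorem finite_sqrt2Q_heightSqrt2Q_le (M R : ℝ) :
    {x ∈ sqrt2Q | heightSqrt2Q x ≤ M ∧ |x| ≤ R}.Finite := by
  set D : ℕ := ⌈2 * M⌉₊
  set N : ℤ := ⌈R * D⌉
  have hrat : {t : ℚ | t.den ≤ D ∧ |(t.num : ℝ)| ≤ N}.Finite := by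
    refine ((Set.finite_Icc (-N) N).image2 (fun (n : ℤ) (d : ℕ) => (n / d : ℚ))
      (Set.finite_Iic D)).subset fun t ⟨hd, hn⟩ => ⟨t.num, ?_, t.den, hd, Rat.num_div_den t⟩
    exact abs_le.1 (by exact_mod_cast hn)
  refine (hrat.image fun t : ℚ => √2 * t).subset ?_
  rintro _ ⟨⟨t, rfl⟩, hH, hR⟩
  have hden : (1 : ℝ) ≤ t.den := by exact_mod_cast t.pos
  have hH' : (t.den : ℝ) ^ 2 / 2 ≤ M := by
    refine le_trans ?_ hH
    rw [heightSqrt2Q_sqrt2_mul]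
    split_ifs <;> nlinarith
  have hdenD : (t.den : ℝ) ≤ D := by
    refine le_trans ?_ (Nat.le_ceil _)
    nlinarith
  refine ⟨t, ⟨by exact_mod_cast hdenD, ?_⟩, rfl⟩
  have ht : |(t : ℝ)| ≤ R := by
    rw [abs_mul, abs_of_pos (by positivity : (0:ℝ) < √2)] at hR
    nlinarith [abs_nonneg (t : ℝ), Real.one_lt_sqrt_two]
  have hnum : |(t.num : ℝ)| = |(t : ℝ)| * t.den := by
    have : (t.num : ℝ) = t * t.den := by exact_mod_cast (Rat.mul_den_eq_num t).symm
    rw [this, abs_mul, abs_of_pos (by positivity : (0:ℝ) < t.den)]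
  rw [hnum]
  calc |(t : ℝ)| * t.den ≤ R * D := mul_le_mul ht hdenD (by positivity) (le_trans (abs_nonneg _) ht)
    _ ≤ N := Int.le_ceil _

theorem tendsto_one_div_heightSqrt2Q_mul_dist (ξ : ℝ) {U : Set ℝ} (hU : U ∈ 𝓝 ξ) :
    Tendsto (fun z : sqrt2Q => 1 / (heightSqrt2Q z * dist ξ z))
      (cofinite ⊓ 𝓟 ((↑) ⁻¹' Uᶜ)) (𝓝 0) := by
  obtain ⟨δ, hδ, hball⟩ := Metric.mem_nhds_iff.1 hU
  refine Metric.tendsto_nhds.2 fun ε hε => ?_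
  rw [eventually_inf_principal, eventually_cofinite]
  refine ((finite_sqrt2Q_heightSqrt2Q_le (1 / (ε * δ)) (|ξ| + 1 / ε)).preimage
    Subtype.val_injective.injOn).subset fun z hz => ?_
  simp only [Set.mem_preimage, Set.mem_compl_iff, Real.dist_0_eq_abs, Classical.not_imp,
    not_lt] at hz
  obtain ⟨hzU, hle⟩ := hz
  have hH := one_le_heightSqrt2Q z
  have hδd : δ ≤ dist ξ z := by
    by_contra! h
    exact hzU (hball (by rwa [Metric.mem_ball, dist_comm]))
  have hr : heightSqrt2Q z * dist ξ z ≤ 1 / ε := by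
    have hpos : 0 < heightSqrt2Q z * dist ξ z := by
      have := hδ.trans_le hδd
      positivity
    rw [abs_of_pos (by positivity), le_div_iff₀ hpos] at hle
    rw [le_div_iff₀ hε]
    linarith
  have hd : dist ξ z ≤ 1 / ε := le_trans (le_mul_of_one_le_left dist_nonneg hH) hr
  refine ⟨z.2, ?_, ?_⟩
  · rw [le_div_iff₀ hε] at hr
    rw [le_div_iff₀ (by positivity)]
    nlinarith [mul_le_mul_of_nonneg_left hδd (zero_le_one.trans hH)]
  · have := abs_sub_abs_le_abs_sub (z : ℝ) ξ
    rw [abs_sub_comm, ← Real.dist_eq] at this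
    linarith

namespace S1II

noncomputable def paramDenom (x : ℝ) : ℝ := x ^ 2 + √2 * x + 1

noncomputable def param (x : ℝ) : EuclideanSpace ℝ (Fin 2) :=
  !₂[(x ^ 2 - 1) / paramDenom x, -(x ^ 2 + 2 * √2 * x + 1) / paramDenom x]

noncomputable def pole : EuclideanSpace ℝ (Fin 2) := !₂[1, -1]

noncomputable def invParam (v : EuclideanSpace ℝ (Fin 2)) : ℝ := √2 * (v 1 + 1) / (v 0 - v 1 - 2)

theorem pole_mem : pole ∈ S1II := by
  show (1 : ℝ) ^ 2 + (-1) ^ 2 = 2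
  norm_num

theorem pole_mem_ratPts : pole ∈ ratPts 2 :=
  Fin.forall_fin_two.2 ⟨⟨1, by simp [pole]⟩, ⟨-1, by simp [pole]⟩⟩

theorem half_le_paramDenom (x : ℝ) : 1 / 2 ≤ paramDenom x := by
  have hsq := Real.sq_sqrt (zero_le_two (α := ℝ))
  unfold paramDenom
  nlinarith [sq_nonneg (x + √2 / 2)]

theorem paramDenom_pos (x : ℝ) : 0 < paramDenom x := by
  linarith [half_le_paramDenom x]

@[simp] theorem param_apply_zero (x : ℝ) : param x 0 = (x ^ 2 - 1) / paramDenom x := rfl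

@[simp] theorem param_apply_one (x : ℝ) :
    param x 1 = -(x ^ 2 + 2 * √2 * x + 1) / paramDenom x := rfl

theorem param_mem (x : ℝ) : param x ∈ S1II := by
  have hsq := Real.sq_sqrt (zero_le_two (α := ℝ))
  have := (paramDenom_pos x).ne'
  show param x 0 ^ 2 + param x 1 ^ 2 = 2
  simp only [param_apply_zero, param_apply_one]
  field_simp
  unfold paramDenom
  linear_combination (2 * x ^ 2) * hsq

theorem param_sub_param_sub_two (x : ℝ) : param x 0 - param x 1 - 2 = -2 / paramDenom x := by
  have := (paramDenom_pos x).ne'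
  simp only [param_apply_zero, param_apply_one]
  field_simp
  unfold paramDenom
  ring

theorem param_add_one (x : ℝ) : param x 1 + 1 = -(√2 * x) / paramDenom x := by
  have := (paramDenom_pos x).ne'
  simp only [param_apply_one]
  field_simp
  unfold paramDenom
  ring

theorem invParam_param (x : ℝ) : invParam (param x) = x := by
  have hsq := Real.sq_sqrt (zero_le_two (α := ℝ))
  have := (paramDenom_pos x).ne'
  rw [invParam, param_sub_param_sub_two, param_add_one]
  field_simp
  linear_combination x * hsq

theorem param_injective : Function.Injective param :=
  Function.LeftInverse.injective invParam_param

theorem param_ne_pole (x : ℝ) : param x ≠ pole := fun h => by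
  have h2 := param_sub_param_sub_two x
  rw [h] at h2
  simp only [pole, PiLp.toLp_apply, Matrix.cons_val_zero, Matrix.cons_val_one] at h2
  exact div_ne_zero (by norm_num : (-2 : ℝ) ≠ 0) (paramDenom_pos x).ne' (by linarith)

@[fun_prop] theorem continuous_paramDenom : Continuous paramDenom := by
  unfold paramDenom
  fun_prop

theorem continuous_param : Continuous param := by
  unfold param
  fun_prop (disch := exact fun x => (paramDenom_pos x).ne')

theorem paramDenom_sqrt2_mul_div {a b : ℝ} (hb : b ≠ 0) :
    paramDenom (√2 * a / b) = (2 * a ^ 2 + 2 * a * b + b ^ 2) / b ^ 2 := by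
  have hsq := Real.sq_sqrt (zero_le_two (α := ℝ))
  unfold paramDenom
  field_simp
  linear_combination (a ^ 2 + a * b) * hsq

theorem param_sqrt2_mul_div {a b : ℝ} (hb : b ≠ 0) :
    param (√2 * a / b) = !₂[(2 * a ^ 2 - b ^ 2) / (2 * a ^ 2 + 2 * a * b + b ^ 2),
      -(2 * a ^ 2 + 4 * a * b + b ^ 2) / (2 * a ^ 2 + 2 * a * b + b ^ 2)] := by
  have hsq := Real.sq_sqrt (zero_le_two (α := ℝ))
  have hC : 2 * a ^ 2 + 2 * a * b + b ^ 2 ≠ 0 := by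
    nlinarith [sq_nonneg (2 * a + b), pow_pos (sq_pos_of_ne_zero hb) 1]
  ext i
  fin_cases i
  all_goals
    simp only [Fin.zero_eta, Fin.mk_one, Fin.isValue, param_apply_zero, param_apply_one,
      paramDenom_sqrt2_mul_div hb, Matrix.cons_val_zero, Matrix.cons_val_one,
      Matrix.cons_val_fin_one]
    field_simp
    rw [hsq]
    ring

theorem param_invParam {v : EuclideanSpace ℝ (Fin 2)} (hv : v ∈ S1II) (hn : v ≠ pole) :
    param (invParam v) = v := by
  have hcirc : v 0 ^ 2 + v 1 ^ 2 = 2 := hv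
  have hD : v 0 - v 1 - 2 ≠ 0 := by
    intro hD
    have hy : v 1 = -1 := by
      have : (v 1 + 1) ^ 2 = 0 := by linear_combination hcirc / 2 - (v 0 + v 1 + 2) * hD / 2
      linarith [pow_eq_zero_iff (n := 2) two_ne_zero |>.1 this]
    refine hn (PiLp.ext fun i => ?_)
    fin_cases i <;> simp [pole] <;> linarith
  have hC : 2 * (v 1 + 1) ^ 2 + 2 * (v 1 + 1) * (v 0 - v 1 - 2) + (v 0 - v 1 - 2) ^ 2 =
      -2 * (v 0 - v 1 - 2) := by linear_combination hcirc
  rw [invParam, param_sqrt2_mul_div hD]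
  ext i
  fin_cases i
  · simp only [Fin.zero_eta, Fin.isValue, Matrix.cons_val_zero]
    rw [hC, div_eq_iff (mul_ne_zero (by norm_num) hD)]
    linear_combination hcirc
  · simp only [Fin.isValue, neg_add_rev, Fin.mk_one, Matrix.cons_val_one, Matrix.cons_val_fin_one]
    rw [hC, div_eq_iff (mul_ne_zero (by norm_num) hD)]
    linear_combination -hcirc

theorem dist_param (a b : ℝ) :
    dist (param a) (param b) = 2 * |a - b| / (√(paramDenom a) * √(paramDenom b)) := by
  have hsq := Real.sq_sqrt (zero_le_two (α := ℝ))
  have ha := (paramDenom_pos a).ne'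
  have hb := (paramDenom_pos b).ne'
  have key : (param a 0 - param b 0) ^ 2 + (param a 1 - param b 1) ^ 2 =
      4 * (a - b) ^ 2 / (paramDenom a * paramDenom b) := by
    simp only [param_apply_zero, param_apply_one]
    field_simp
    unfold paramDenom
    linear_combination (2 * a ^ 2 + 2 * b ^ 2 - 4 * a * b - 4 * a * b ^ 3 - 4 * a ^ 3 * b
      + 8 * a ^ 2 * b ^ 2 - 4 * a ^ 3 * b ^ 3 + 2 * a ^ 2 * b ^ 4 + 2 * a ^ 4 * b ^ 2) * hsq
  rw [EuclideanSpace.dist_eq, Fin.sum_univ_two, Real.dist_eq, Real.dist_eq, sq_abs, sq_abs, key,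
    Real.sqrt_div' _ (mul_pos (paramDenom_pos a) (paramDenom_pos b)).le,
    Real.sqrt_mul' _ (paramDenom_pos b).le]
  congr 1
  rw [Real.sqrt_mul' _ (sq_nonneg _), Real.sqrt_sq_eq_abs]
  norm_num

theorem param_sqrt2_mul_rat (t : ℚ) : param (√2 * t) ∈ ratPts 2 ∧
    heightVec (param (√2 * t)) = heightSqrt2Q (√2 * t) * paramDenom (√2 * t) := by
  have hcop : IsCoprime t.num t.den := Int.isCoprime_iff_gcd_eq_one.2 t.reduced
  have hQ : (t.den : ℝ) ≠ 0 := by positivity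
  have ht : √2 * (t : ℝ) = √2 * t.num / t.den := by rw [Rat.cast_def, mul_div_assoc]
  rw [heightSqrt2Q_sqrt2_mul, ht, paramDenom_sqrt2_mul_div hQ]
  rcases Nat.even_or_odd t.den with ⟨q, hq⟩ | hodd
  · -- `t = P / 2q` with `P` odd: cancelling the common factor `2` leaves the forms of the odd
    -- case in `(q, P)`, with the first numerator negated.
    have hq2 : (t.den : ℤ) = 2 * q := by omega
    rw [hq2] at hcop
    have hP : Odd t.num := Int.isCoprime_two_right.1 hcop.of_mul_right_left
    have hqP : IsCoprime (q : ℤ) t.num := hcop.of_mul_right_right.symm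
    have hC : 0 < 2 * (q : ℤ) ^ 2 + 2 * q * t.num + t.num ^ 2 := by
      have : t.num ≠ 0 := fun h => by simp [h] at hP
      nlinarith [sq_nonneg (t.num + q), sq_nonneg (q : ℤ), sq_pos_of_ne_zero this]
    have hQr : (t.den : ℝ) = 2 * q := by exact_mod_cast hq2
    have hq0 : (q : ℝ) ≠ 0 := fun h => hQ (by rw [hQr, h, mul_zero])
    have hv : ∀ i, param (√2 * t.num / t.den) i =
        ((![-(2 * q ^ 2 - t.num ^ 2), -(2 * q ^ 2 + 4 * q * t.num + t.num ^ 2)] i : ℤ) : ℝ) /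
          ((2 * q ^ 2 + 2 * q * t.num + t.num ^ 2 : ℤ) : ℝ) := by
      rw [param_sqrt2_mul_div hQ, Fin.forall_fin_two]
      push_cast [Matrix.cons_val_zero, Matrix.cons_val_one, Matrix.cons_val_fin_one, hQr]
      constructor <;> field_simp <;> ring
    obtain ⟨hmem, hH⟩ := heightVec_eq_of_isCoprime hC
      (Fin.forall_fin_two.2 ⟨(Int.isCoprime_two_sq_sub_sq hqP hP).neg_left,
        (Int.isCoprime_two_sq_add_four_mul hqP hP).neg_left⟩) hv
    refine ⟨hmem, hH.trans ?_⟩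
    rw [if_neg (by omega), hQr]
    field_simp
    push_cast
    ring
  · have hQodd : Odd (t.den : ℤ) := by exact_mod_cast hodd
    have hC : 0 < 2 * t.num ^ 2 + 2 * t.num * t.den + (t.den : ℤ) ^ 2 := by
      nlinarith [sq_nonneg (t.num + t.den), sq_pos_of_pos (Int.natCast_pos.2 t.pos)]
    have hv : ∀ i, param (√2 * t.num / t.den) i =
        ((![2 * t.num ^ 2 - t.den ^ 2, -(2 * t.num ^ 2 + 4 * t.num * t.den + t.den ^ 2)] i :
          ℤ) : ℝ) /
          ((2 * t.num ^ 2 + 2 * t.num * t.den + t.den ^ 2 : ℤ) : ℝ) := by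
      rw [param_sqrt2_mul_div hQ, Fin.forall_fin_two]
      push_cast [Matrix.cons_val_zero, Matrix.cons_val_one, Matrix.cons_val_fin_one]
      constructor <;> ring
    obtain ⟨hmem, hH⟩ := heightVec_eq_of_isCoprime hC
      (Fin.forall_fin_two.2 ⟨Int.isCoprime_two_sq_sub_sq hcop hQodd,
        (Int.isCoprime_two_sq_add_four_mul hcop hQodd).neg_left⟩) hv
    refine ⟨hmem, hH.trans ?_⟩
    rw [if_pos (Nat.odd_iff.1 hodd)]
    field_simp
    push_cast
    ring

theorem range_param : Set.range param = S1II \ {pole} := by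
  refine Set.Subset.antisymm ?_ fun v ⟨hv, hn⟩ => ⟨invParam v, param_invParam hv hn⟩
  rintro _ ⟨x, rfl⟩
  exact ⟨param_mem x, param_ne_pole x⟩

theorem image_param_sqrt2Q : param '' sqrt2Q = (S1II ∩ ratPts 2) \ {pole} := by
  refine Set.Subset.antisymm ?_
    fun v ⟨⟨hv, hrat⟩, hn⟩ => ⟨invParam v, ?_, param_invParam hv hn⟩
  · rintro _ ⟨_, ⟨t, rfl⟩, rfl⟩
    exact ⟨⟨param_mem _, (param_sqrt2_mul_rat t).1⟩, param_ne_pole _⟩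
  · obtain ⟨x, hx⟩ := hrat 0
    obtain ⟨y, hy⟩ := hrat 1
    exact ⟨(y + 1) / (x - y - 2), by rw [invParam, hx, hy]; push_cast; ring⟩

theorem two_mul_one_div_heightVec_param_mul_dist {ξ z : ℝ} (hz : z ∈ sqrt2Q) (hξz : ξ ≠ z) :
    2 * (1 / (heightVec (param z) * dist (param ξ) (param z))) =
      √(paramDenom ξ) / √(paramDenom z) * (1 / (heightSqrt2Q z * dist ξ z)) := by
  obtain ⟨t, rfl⟩ := hz
  have hH := (zero_lt_one.trans_le (one_le_heightSqrt2Q (√2 * t))).ne'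
  have hd : |ξ - √2 * t| ≠ 0 := abs_ne_zero.2 (sub_ne_zero.2 hξz)
  have hξ := (Real.sqrt_pos.2 (paramDenom_pos ξ)).ne'
  have hz := (Real.sqrt_pos.2 (paramDenom_pos (√2 * t))).ne'
  have hdz := (paramDenom_pos (√2 * t)).ne'
  rw [(param_sqrt2_mul_rat t).2, dist_param, Real.dist_eq]
  field_simp
  exact (Real.sq_sqrt (paramDenom_pos _).le)

noncomputable def paramRat (z : sqrt2Q) : ↥(S1II ∩ ratPts 2) :=
  ⟨param z, (image_param_sqrt2Q.subset (Set.mem_image_of_mem param z.2)).1⟩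

theorem map_paramRat_cofinite : map paramRat cofinite = cofinite := by
  refine Function.Injective.map_cofinite_eq
    (fun a b hab => Subtype.ext (param_injective (congrArg Subtype.val hab)))
    ((Set.finite_singleton ⟨pole, pole_mem, pole_mem_ratPts⟩).subset fun v hv => ?_)
  by_contra hne
  obtain ⟨z, hz, hzv⟩ : (v : EuclideanSpace ℝ (Fin 2)) ∈ param '' sqrt2Q := by
    rw [image_param_sqrt2Q]
    exact ⟨v.2, fun h => hne (Subtype.ext h)⟩
  exact hv ⟨⟨z, hz⟩, Subtype.ext hzv⟩

theorem tendsto_sqrt_paramDenom_div (ξ : ℝ) :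
    Tendsto (fun x => √(paramDenom ξ) / √(paramDenom x)) (𝓝 ξ) (𝓝 1) :=
  (continuous_const.div (by fun_prop) fun x => (Real.sqrt_pos.2 (paramDenom_pos x)).ne').tendsto'
    ξ 1 (div_self (Real.sqrt_pos.2 (paramDenom_pos ξ)).ne')

theorem lagrangeNumber_sqrt2Q_eq (ξ : ℝ) (hξ : ξ ∉ sqrt2Q) :
    lagrangeNumber sqrt2Q heightSqrt2Q ξ =
      ENNReal.ofReal 2 * lagrangeNumber (S1II ∩ ratPts 2) heightVec (param ξ) := by
  set r : sqrt2Q → ℝ := fun z => 1 / (heightSqrt2Q z * dist ξ z)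
  set ρ : sqrt2Q → ℝ := fun z => √(paramDenom ξ) / √(paramDenom z)
  have hcircle : ENNReal.ofReal 2 * lagrangeNumber (S1II ∩ ratPts 2) heightVec (param ξ) =
      limsup (fun z => ENNReal.ofReal (ρ z * r z)) cofinite := by
    rw [lagrangeNumber, ← map_paramRat_cofinite, ← limsup_comp,
      ← ENNReal.limsup_const_mul_of_ne_top ENNReal.ofReal_ne_top]
    congr 1
    funext z
    rw [Function.comp_apply, ← ENNReal.ofReal_mul zero_le_two]
    exact congrArg ENNReal.ofReal
      (two_mul_one_div_heightVec_param_mul_dist z.2 fun h => hξ (h ▸ z.2))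
  have hρ : Tendsto (fun z => ENNReal.ofReal (ρ z)) (cofinite ⊓ comap (↑) (𝓝 ξ)) (𝓝 1) := by
    simpa using ENNReal.tendsto_ofReal
      (((tendsto_sqrt_paramDenom_div ξ).comp tendsto_comap).mono_left inf_le_right)
  have hr : ∀ U ∈ 𝓝 ξ,
      Tendsto (fun z => ENNReal.ofReal (r z)) (cofinite ⊓ 𝓟 ((↑) ⁻¹' Uᶜ)) (𝓝 0) := fun U hU =>
    ENNReal.ofReal_zero ▸ ENNReal.tendsto_ofReal (tendsto_one_div_heightSqrt2Q_mul_dist ξ hU)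
  have hρr : ∀ U ∈ 𝓝 ξ,
      Tendsto (fun z => ENNReal.ofReal (ρ z * r z)) (cofinite ⊓ 𝓟 ((↑) ⁻¹' Uᶜ)) (𝓝 0) := by
    intro U hU
    set K := √(paramDenom ξ) / √(1 / 2)
    have hρK : ∀ z, ρ z ≤ K := fun z =>
      div_le_div_of_nonneg_left (Real.sqrt_nonneg _) (Real.sqrt_pos.2 (by norm_num))
        (Real.sqrt_le_sqrt (half_le_paramDenom z))
    have hr0 : ∀ z, 0 ≤ r z := fun z =>
      one_div_nonneg.2 (mul_nonneg (zero_le_one.trans (one_le_heightSqrt2Q z)) dist_nonneg)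
    have hKr : Tendsto (fun z => K * r z) (cofinite ⊓ 𝓟 ((↑) ⁻¹' Uᶜ)) (𝓝 0) := by
      simpa only [mul_zero] using (tendsto_one_div_heightSqrt2Q_mul_dist ξ hU).const_mul K
    exact ENNReal.ofReal_zero ▸ ENNReal.tendsto_ofReal (squeeze_zero
      (fun z => mul_nonneg (by positivity) (hr0 z))
      (fun z => mul_le_mul_of_nonneg_right (hρK z) (hr0 z)) hKr)
  have hmul : ∀ z, ENNReal.ofReal (ρ z * r z) = ENNReal.ofReal (ρ z) * ENNReal.ofReal (r z) :=
    fun z => ENNReal.ofReal_mul (by positivity)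
  rw [hcircle, lagrangeNumber, limsup_eq_limsup_inf_comap_nhds hr,
    limsup_eq_limsup_inf_comap_nhds hρr]
  simp_rw [hmul]
  exact (ENNReal.limsup_mul_of_tendsto_one hρ).symm

end S1II

/-- Theorem 1.1(b): there exist a rational point `𝐧 ∈ 𝐒¹_II ∩ ℚ²` and a continuous
bijection `Φ : ℝ → 𝐒¹_II ∖ {𝐧}` mapping `√2ℚ` onto `(𝐒¹_II ∩ ℚ²) ∖ {𝐧}` such that
`L_(ℝ,√2ℚ)(ξ) = 2 · L_(𝐒¹_II, 𝐒¹_II∩ℚ²)(Φ ξ)` for all `ξ ∈ ℝ ∖ √2ℚ`. -/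
theorem lagrange_S1II :
    ∃ n ∈ S1II ∩ ratPts 2, ∃ Φ : ℝ → EuclideanSpace ℝ (Fin 2),
      Continuous Φ ∧ Function.Injective Φ ∧ Set.range Φ = S1II \ {n} ∧
      Φ '' sqrt2Q = (S1II ∩ ratPts 2) \ {n} ∧
      ∀ ξ : ℝ, ξ ∉ sqrt2Q →
        lagrangeNumber sqrt2Q heightSqrt2Q ξ =
          ENNReal.ofReal 2 *
            lagrangeNumber (S1II ∩ ratPts 2) heightVec (Φ ξ) :=
  ⟨S1II.pole, ⟨S1II.pole_mem, S1II.pole_mem_ratPts⟩, S1II.param, S1II.continuous_param,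
    S1II.param_injective, S1II.range_param, S1II.image_param_sqrt2Q,
    S1II.lagrangeNumber_sqrt2Q_eq⟩
end

section
/- Let l ≥ 2, let P ⊆ ℝ^l be an affine hyperplane, let 𝐧 ∈ ℝ^l ∖ P with D = dist(𝐧, P) > 0, let R > 0, and let Ψ(x) = 𝐧 + 2RD·(x−𝐧)/|x−𝐧|² be the inversion of ℝ^l in the sphere of radius √(2RD) centered at 𝐧. Let 𝐩 ∈ P, let r > 0, let 𝐪 be the orthogonal projection of 𝐧 onto P, and let u = (𝐧 − 𝐪)/D (the unit normal of P pointing toward 𝐧). Then the image under Ψ of the sphere of radius r centered at 𝐩 − r·u (the sphere tangent to P at 𝐩 lying on the side of P opposite to 𝐧) is a sphere of radius ρ = 2rRD / (|𝐩 − 𝐧|² + 2rD). -/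
open scoped RealInnerProductSpace

private lemma key_inv {l : ℕ} (n a x : EuclideanSpace ℝ (Fin l)) (k r : ℝ)
    (hk : 0 < k) (hr : 0 < r) (hd : r < ‖a - n‖) (hx : ‖x - a‖ = r) :
    ‖(n + (k / ‖x - n‖ ^ 2) • (x - n)) - (n + (k / (‖a - n‖ ^ 2 - r ^ 2)) • (a - n))‖
      = k * r / (‖a - n‖ ^ 2 - r ^ 2) := by
  have hs : 0 < ‖x - n‖ := by
    have h1 : ‖a - n‖ ≤ ‖x - n‖ + ‖x - a‖ := by
      calc ‖a - n‖ = ‖(x - n) - (x - a)‖ := by congr 1; abel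
      _ ≤ ‖x - n‖ + ‖x - a‖ := norm_sub_le _ _
    linarith
  have hdr : 0 < ‖a - n‖ ^ 2 - r ^ 2 := by nlinarith [hr.trans hd]
  have hip : 2 * ⟪x - n, a - n⟫ = ‖x - n‖ ^ 2 + ‖a - n‖ ^ 2 - r ^ 2 := by
    have h2 : ‖(x - n) - (a - n)‖ ^ 2
        = ‖x - n‖ ^ 2 - 2 * ⟪x - n, a - n⟫ + ‖a - n‖ ^ 2 := norm_sub_sq_real _ _
    have h3 : (x - n) - (a - n) = x - a := by abel
    rw [h3, hx] at h2
    linarith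
  have hLHS : (n + (k / ‖x - n‖ ^ 2) • (x - n)) - (n + (k / (‖a - n‖ ^ 2 - r ^ 2)) • (a - n))
      = (k / ‖x - n‖ ^ 2) • (x - n) - (k / (‖a - n‖ ^ 2 - r ^ 2)) • (a - n) := by abel
  rw [hLHS]
  have goal2 : ‖(k / ‖x - n‖ ^ 2) • (x - n) - (k / (‖a - n‖ ^ 2 - r ^ 2)) • (a - n)‖ ^ 2
      = (k * r / (‖a - n‖ ^ 2 - r ^ 2)) ^ 2 := by
    rw [norm_sub_sq_real, real_inner_smul_left, real_inner_smul_right,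
      norm_smul, norm_smul, Real.norm_eq_abs, Real.norm_eq_abs, mul_pow, mul_pow, sq_abs, sq_abs]
    set I := ⟪x - n, a - n⟫ with hI
    set s := ‖x - n‖ with hsdef
    set dd := ‖a - n‖ with hdd
    have hs2 : s ^ 2 ≠ 0 := by positivity
    have hdr2 : dd ^ 2 - r ^ 2 ≠ 0 := ne_of_gt hdr
    have hI2 : I = (s ^ 2 + dd ^ 2 - r ^ 2) / 2 := by linarith
    rw [hI2]
    field_simp
    ring
  have hnn : 0 ≤ k * r / (‖a - n‖ ^ 2 - r ^ 2) := by positivity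
  nlinarith [norm_nonneg ((k / ‖x - n‖ ^ 2) • (x - n) - (k / (‖a - n‖ ^ 2 - r ^ 2)) • (a - n)),
    goal2, hnn]

/-- Lemma 6.1.  Let `P ⊆ ℝ^l` be the affine hyperplane through `q` with unit normal `u`,
let `𝐧 = q + D·u` (so `dist(𝐧, P) = D > 0`), and let `Ψ` be the inversion of `ℝ^l` in
the sphere of radius `√(2RD)` centered at `𝐧`.  If `p ∈ P` and `r > 0`, then the image
under `Ψ` of the sphere of radius `r` centered at `p − r·u` (the sphere tangent to `P`
at `p` lying on the side of `P` opposite to `𝐧`) is a sphere of radius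
`ρ = 2rRD / (|p − 𝐧|² + 2rD)`. -/
theorem inversion_horosphere {l : ℕ} (hl : 2 ≤ l)
    (u q : EuclideanSpace ℝ (Fin l)) (hu : ‖u‖ = 1)
    (D R r : ℝ) (hD : 0 < D) (hR : 0 < R) (hr : 0 < r)
    (P : Set (EuclideanSpace ℝ (Fin l))) (hP : P = {x | ⟪x - q, u⟫ = 0})
    (n : EuclideanSpace ℝ (Fin l)) (hn : n = q + D • u)
    (Ψ : EuclideanSpace ℝ (Fin l) → EuclideanSpace ℝ (Fin l))
    (hΨ : ∀ x, x ≠ n → Ψ x = n + (2 * R * D / ‖x - n‖ ^ 2) • (x - n))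
    (p : EuclideanSpace ℝ (Fin l)) (hp : p ∈ P) :
    ∃ c' : EuclideanSpace ℝ (Fin l),
      Ψ '' Metric.sphere (p - r • u) r
        = Metric.sphere c' (2 * r * R * D / (‖p - n‖ ^ 2 + 2 * r * D)) := by
  set k : ℝ := 2 * R * D with hk
  have hkpos : 0 < k := by positivity
  set a : EuclideanSpace ℝ (Fin l) := p - r • u with ha
  have hpq : ⟪p - q, u⟫ = 0 := by rw [hP] at hp; exact hp
  have han : a - n = (p - q) - (r + D) • u := by
    rw [ha, hn, add_smul]; abel
  have hpn : p - n = (p - q) - D • u := by rw [hn]; abel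
  have hnorm_gen : ∀ t : ℝ, ‖(p - q) - t • u‖ ^ 2 = ‖p - q‖ ^ 2 + t ^ 2 := by
    intro t
    rw [norm_sub_sq_real, real_inner_smul_right, hpq, norm_smul, Real.norm_eq_abs, hu]
    rw [mul_pow, sq_abs]
    ring
  have hanormsq : ‖a - n‖ ^ 2 = ‖p - q‖ ^ 2 + (r + D) ^ 2 := by rw [han]; exact hnorm_gen _
  have hpnormsq : ‖p - n‖ ^ 2 = ‖p - q‖ ^ 2 + D ^ 2 := by rw [hpn]; exact hnorm_gen _
  have hdenom : ‖a - n‖ ^ 2 - r ^ 2 = ‖p - n‖ ^ 2 + 2 * r * D := by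
    rw [hanormsq, hpnormsq]; ring
  have hdenpos : 0 < ‖a - n‖ ^ 2 - r ^ 2 := by
    rw [hdenom]; positivity
  have hrd : r < ‖a - n‖ := by nlinarith [norm_nonneg (a - n)]
  refine ⟨n + (k / (‖a - n‖ ^ 2 - r ^ 2)) • (a - n), ?_⟩
  set c' : EuclideanSpace ℝ (Fin l) := n + (k / (‖a - n‖ ^ 2 - r ^ 2)) • (a - n) with hc'
  have hrad : 2 * r * R * D / (‖p - n‖ ^ 2 + 2 * r * D) = k * r / (‖a - n‖ ^ 2 - r ^ 2) := by
    rw [hdenom, hk]; ring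
  rw [hrad]
  have hc'n : c' - n = (k / (‖a - n‖ ^ 2 - r ^ 2)) • (a - n) := by rw [hc']; abel
  have hc'nnorm : ‖c' - n‖ = (k / (‖a - n‖ ^ 2 - r ^ 2)) * ‖a - n‖ := by
    rw [hc'n, norm_smul, Real.norm_eq_abs, abs_of_pos (by positivity)]
  have hρpos : 0 < k * r / (‖a - n‖ ^ 2 - r ^ 2) := by positivity
  have hρltd' : k * r / (‖a - n‖ ^ 2 - r ^ 2) < ‖c' - n‖ := by
    rw [hc'nnorm]
    have hkS : 0 < k / (‖a - n‖ ^ 2 - r ^ 2) := by positivity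
    have h2 := mul_lt_mul_of_pos_left hrd hkS
    have h3 : k * r / (‖a - n‖ ^ 2 - r ^ 2) = k / (‖a - n‖ ^ 2 - r ^ 2) * r := by ring
    linarith [h3 ▸ h2]
  ext y
  constructor
  · rintro ⟨x, hx, rfl⟩
    rw [Metric.mem_sphere, dist_eq_norm] at hx ⊢
    have hxa : ‖x - a‖ = r := hx
    have hxn : x ≠ n := by
      intro h
      rw [h, ← norm_sub_rev] at hxa
      exact absurd hxa (ne_of_lt hrd).symm
    rw [hΨ x hxn]
    exact key_inv n a x k r hkpos hr hrd hxa
  · intro hy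
    rw [Metric.mem_sphere, dist_eq_norm] at hy
    have hyn : y ≠ n := by
      intro h
      rw [h, ← norm_sub_rev] at hy
      exact absurd hy (ne_of_lt hρltd').symm
    have hynpos : 0 < ‖y - n‖ := by
      rw [norm_pos_iff, sub_ne_zero]; exact hyn
    set x : EuclideanSpace ℝ (Fin l) := n + (k / ‖y - n‖ ^ 2) • (y - n) with hxdef
    have hkey := key_inv n c' y k (k * r / (‖a - n‖ ^ 2 - r ^ 2)) hkpos hρpos hρltd' hy
    have hA : ‖c' - n‖ ^ 2 - (k * r / (‖a - n‖ ^ 2 - r ^ 2)) ^ 2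
        = k ^ 2 / (‖a - n‖ ^ 2 - r ^ 2) := by
      rw [hc'nnorm]
      have hd2 : ‖a - n‖ ^ 2 - r ^ 2 ≠ 0 := ne_of_gt hdenpos
      field_simp
    have hcenter : n + (k / (‖c' - n‖ ^ 2 - (k * r / (‖a - n‖ ^ 2 - r ^ 2)) ^ 2)) • (c' - n)
        = a := by
      rw [hA, hc'n, smul_smul]
      have hd2 : ‖a - n‖ ^ 2 - r ^ 2 ≠ 0 := ne_of_gt hdenpos
      have hone : k / (k ^ 2 / (‖a - n‖ ^ 2 - r ^ 2)) * (k / (‖a - n‖ ^ 2 - r ^ 2)) = 1 := by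
        field_simp
      rw [hone, one_smul]
      abel
    have hradius : k * (k * r / (‖a - n‖ ^ 2 - r ^ 2))
        / (‖c' - n‖ ^ 2 - (k * r / (‖a - n‖ ^ 2 - r ^ 2)) ^ 2) = r := by
      rw [hA]
      have hd2 : ‖a - n‖ ^ 2 - r ^ 2 ≠ 0 := ne_of_gt hdenpos
      field_simp
    rw [hcenter, hradius] at hkey
    have hxn2 : x - n = (k / ‖y - n‖ ^ 2) • (y - n) := by rw [hxdef]; abel
    have hnz : (k / ‖y - n‖ ^ 2) • (y - n) ≠ 0 :=
      smul_ne_zero (by positivity) (sub_ne_zero.mpr hyn)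
    have hxne : x ≠ n := by
      intro h
      rw [h, sub_self] at hxn2
      exact hnz hxn2.symm
    refine ⟨x, ?_, ?_⟩
    · rw [Metric.mem_sphere, dist_eq_norm]
      exact hkey
    · rw [hΨ x hxne, hxn2, norm_smul, Real.norm_eq_abs,
        abs_of_pos (by positivity : (0:ℝ) < k / ‖y - n‖ ^ 2), smul_smul]
      have h1 : ‖y - n‖ ≠ 0 := ne_of_gt hynpos
      have hcoef : k / (k / ‖y - n‖ ^ 2 * ‖y - n‖) ^ 2 * (k / ‖y - n‖ ^ 2) = 1 := by
        field_simp
      rw [hcoef, one_smul]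
      abel
end

section
/- Let (a/c, b/c) and (a'/c', b'/c') be two distinct rational points of 𝐒¹_I = {(x₁,x₂) ∈ ℝ² : x₁²+x₂² = 1}, where a, b, c and a', b', c' are integers with a² + b² = c², a'² + b'² = c'², gcd(a,b,c) = 1, gcd(a',b',c') = 1, and c, c' ≥ 1. Define the horocycle at (a/c,b/c) to be the circle of radius ρ = 1/(1 + √2·c) centered at (1 − ρ)·(a/c, b/c) (internally tangent to 𝐒¹_I at (a/c,b/c)), and similarly with primes. Then the Euclidean distance between the two centers is at least the sum ρ + ρ' of the two radii (the horocycles are tangent or disjoint), with equality (tangency) if and only if aa' + bb' − cc' = −1. -/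
/-!
The center of the horocycle at a unit vector `u` of height `c` is `√2 c ρ • u`, since
`1 - ρ = √2 c ρ` for `ρ = 1/(1+√2 c)`. Expanding the squared distance of two centers gives
`D² = (ρ+ρ')² + 4ρρ'(cc'(1 - ⟪u,u'⟫) - 1)`, and for rational points `cc'(1 - ⟪u,u'⟫)` is the
integer `cc' - aa' - bb'`, which is positive for distinct points by the equality case of
Cauchy–Schwarz. Hence the last term is a nonnegative multiple of `4ρρ'`, vanishing exactly when
`aa' + bb' - cc' = -1`.
-/

open RealInnerProductSpace

theorem dist_smul_smul_sq_of_norm_eq_one {E : Type*} [NormedAddCommGroup E]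
    [InnerProductSpace ℝ E] {u v : E} (hu : ‖u‖ = 1) (hv : ‖v‖ = 1) (ρ σ : ℝ) :
    dist ((1 - ρ) • u) ((1 - σ) • v) ^ 2 =
      (ρ + σ) ^ 2 + 2 * (1 - ρ) * (1 - σ) * (1 - ⟪u, v⟫) - 4 * ρ * σ := by
  rw [dist_eq_norm, norm_sub_sq_real, norm_smul, norm_smul, hu, hv, real_inner_smul_left,
    real_inner_smul_right, Real.norm_eq_abs, Real.norm_eq_abs, mul_one, mul_one, sq_abs, sq_abs]
  ring

theorem one_sub_eq_sqrt_two_mul {c ρ : ℝ} (hc : 0 ≤ c) (hρ : ρ = 1 / (1 + √2 * c)) :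
    1 - ρ = √2 * c * ρ := by
  have : 0 < 1 + √2 * c := by positivity
  rw [hρ]
  field_simp
  ring

theorem dist_horocycle_centers_sq {E : Type*} [NormedAddCommGroup E] [InnerProductSpace ℝ E]
    {u v : E} (hu : ‖u‖ = 1) (hv : ‖v‖ = 1) {c c' ρ ρ' : ℝ} (hc : 0 ≤ c) (hc' : 0 ≤ c')
    (hρ : ρ = 1 / (1 + √2 * c)) (hρ' : ρ' = 1 / (1 + √2 * c')) :
    dist ((1 - ρ) • u) ((1 - ρ') • v) ^ 2 =
      (ρ + ρ') ^ 2 + 4 * ρ * ρ' * (c * c' * (1 - ⟪u, v⟫) - 1) := by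
  rw [dist_smul_smul_sq_of_norm_eq_one hu hv, one_sub_eq_sqrt_two_mul hc hρ,
    one_sub_eq_sqrt_two_mul hc' hρ']
  linear_combination (2 * c * c' * ρ * ρ' * (1 - ⟪u, v⟫)) * Real.sq_sqrt zero_le_two

theorem add_le_and_eq_iff_of_sq_eq {ρ σ D k : ℝ} (hρ : 0 < ρ) (hσ : 0 < σ) (hD : 0 ≤ D)
    (hk : 0 ≤ k) (h : D ^ 2 = (ρ + σ) ^ 2 + 4 * ρ * σ * k) :
    ρ + σ ≤ D ∧ (D = ρ + σ ↔ k = 0) := by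
  have hρσ : 0 < 4 * ρ * σ := by positivity
  have hle : ρ + σ ≤ D := by nlinarith [mul_nonneg hρσ.le hk]
  refine ⟨hle, fun hEq => ?_, fun hk0 => ?_⟩
  · subst hEq
    simpa [hρσ.ne'] using h
  · rw [hk0, mul_zero, add_zero] at h
    exact (pow_left_inj₀ hD (by positivity) two_ne_zero).1 h

theorem real_inner_lt_one_of_norm_eq_one {E : Type*} [NormedAddCommGroup E]
    [InnerProductSpace ℝ E] {u v : E} (hu : ‖u‖ = 1) (hv : ‖v‖ = 1) (huv : u ≠ v) :
    ⟪u, v⟫ < 1 :=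
  (real_inner_le_one_of_norm_eq_one hu hv).lt_of_ne
    (mt (inner_eq_one_iff_of_norm_eq_one hu hv).1 huv)

theorem EuclideanSpace.inner_eq_of_coords {z z' : EuclideanSpace ℝ (Fin 2)}
    {a b c a' b' c' : ℝ} (hz0 : z 0 = a / c) (hz1 : z 1 = b / c)
    (hz0' : z' 0 = a' / c') (hz1' : z' 1 = b' / c') :
    ⟪z, z'⟫ = (a * a' + b * b') / (c * c') := by
  simp only [PiLp.inner_apply, Fin.sum_univ_two, RCLike.inner_apply, conj_trivial, hz0, hz1,
    hz0', hz1']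
  ring

theorem EuclideanSpace.norm_eq_one_of_coords {z : EuclideanSpace ℝ (Fin 2)} {a b c : ℝ}
    (hc : c ≠ 0) (habc : a ^ 2 + b ^ 2 = c ^ 2) (hz0 : z 0 = a / c) (hz1 : z 1 = b / c) :
    ‖z‖ = 1 := by
  have h : ‖z‖ ^ 2 = 1 := by
    rw [← real_inner_self_eq_norm_sq, EuclideanSpace.inner_eq_of_coords hz0 hz1 hz0 hz1,
      ← sq, ← sq, habc, ← sq, div_self (pow_ne_zero 2 hc)]
  exact (pow_eq_one_iff_of_nonneg (norm_nonneg z) two_ne_zero).1 h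

theorem horocycles_S1I_general (a b c a' b' c' : ℤ) (hc : 1 ≤ c) (hc' : 1 ≤ c')
    (hpyth : a ^ 2 + b ^ 2 = c ^ 2) (hpyth' : a' ^ 2 + b' ^ 2 = c' ^ 2)
    (z z' : EuclideanSpace ℝ (Fin 2))
    (hz0 : z 0 = (a : ℝ) / c) (hz1 : z 1 = (b : ℝ) / c)
    (hz0' : z' 0 = (a' : ℝ) / c') (hz1' : z' 1 = (b' : ℝ) / c')
    (hne : z ≠ z')
    (ρ ρ' : ℝ) (hρ : ρ = 1 / (1 + Real.sqrt 2 * c)) (hρ' : ρ' = 1 / (1 + Real.sqrt 2 * c')) :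
    ρ + ρ' ≤ dist ((1 - ρ) • z) ((1 - ρ') • z') ∧
    (dist ((1 - ρ) • z) ((1 - ρ') • z') = ρ + ρ' ↔ a * a' + b * b' - c * c' = -1) := by
  have hcR : (0 : ℝ) < c := by exact_mod_cast hc
  have hcR' : (0 : ℝ) < c' := by exact_mod_cast hc'
  have hz := EuclideanSpace.norm_eq_one_of_coords hcR.ne' (by exact_mod_cast hpyth) hz0 hz1
  have hz' := EuclideanSpace.norm_eq_one_of_coords hcR'.ne' (by exact_mod_cast hpyth') hz0' hz1'
  have hinner := EuclideanSpace.inner_eq_of_coords hz0 hz1 hz0' hz1'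
  have hlt : a * a' + b * b' < c * c' := by
    have := real_inner_lt_one_of_norm_eq_one hz hz' hne
    rw [hinner, div_lt_one (by positivity)] at this
    exact_mod_cast this
  have hD := dist_horocycle_centers_sq hz hz' hcR.le hcR'.le hρ hρ'
  rw [hinner, mul_one_sub, mul_div_cancel₀ _ (by positivity)] at hD
  have hρpos : 0 < ρ := by rw [hρ]; positivity
  have hρpos' : 0 < ρ' := by rw [hρ']; positivity
  have hk : (0 : ℤ) ≤ c * c' - (a * a' + b * b') - 1 := by omega
  obtain ⟨hle, hiff⟩ := add_le_and_eq_iff_of_sq_eq hρpos hρpos' dist_nonneg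
    (Int.cast_nonneg (R := ℝ) hk) (by push_cast; exact hD)
  refine ⟨hle, hiff.trans ?_⟩
  norm_cast
  omega

/-- Horocycle tangency on `𝐒¹_I`.  Let `(a/c, b/c)` and `(a'/c', b'/c')` be two distinct
rational points of the unit circle (`a²+b²=c²`, `gcd(a,b,c)=1`, `c ≥ 1`, and similarly
with primes).  The horocycle at `(a/c, b/c)` has radius `ρ = 1/(1+√2·c)` and center
`(1−ρ)·(a/c, b/c)`.  Then the distance between the two centers is at least `ρ + ρ'`,
with equality (tangency) if and only if `aa' + bb' − cc' = −1`. -/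
theorem horocycles_S1I (a b c a' b' c' : ℤ) (hc : 1 ≤ c) (hc' : 1 ≤ c')
    (hpyth : a ^ 2 + b ^ 2 = c ^ 2) (hpyth' : a' ^ 2 + b' ^ 2 = c' ^ 2)
    (hgcd : Int.gcd (Int.gcd a b) c = 1) (hgcd' : Int.gcd (Int.gcd a' b') c' = 1)
    (z z' : EuclideanSpace ℝ (Fin 2))
    (hz0 : z 0 = (a : ℝ) / c) (hz1 : z 1 = (b : ℝ) / c)
    (hz0' : z' 0 = (a' : ℝ) / c') (hz1' : z' 1 = (b' : ℝ) / c')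
    (hne : z ≠ z')
    (ρ ρ' : ℝ) (hρ : ρ = 1 / (1 + Real.sqrt 2 * c)) (hρ' : ρ' = 1 / (1 + Real.sqrt 2 * c')) :
    ρ + ρ' ≤ dist ((1 - ρ) • z) ((1 - ρ') • z') ∧
    (dist ((1 - ρ) • z) ((1 - ρ') • z') = ρ + ρ' ↔ a * a' + b * b' - c * c' = -1) :=
  horocycles_S1I_general a b c a' b' c' hc hc' hpyth hpyth' z z' hz0 hz1 hz0' hz1' hne ρ ρ' hρ hρ'
end

section
/- Let z = (a,b,c,d)/h and z' = (a',b',c',d')/h' be two distinct rational points of 𝐒²_III, where (a,b,c,d) and (a',b',c',d') are integer vectors with gcd(a,b,c,d) = 1, gcd(a',b',c',d') = 1, h = a+b+c+d ≥ 1, h' = a'+b'+c'+d' ≥ 1, and a²+b²+c²+d² = h², a'²+b'²+c'²+d'² = h'². Let 𝐜 = (1/4,1/4,1/4,1/4) and R = √3/2, and define the horosphere at z to be the sphere of radius ρ = √3/(2 + √6·h) centered at 𝐜 + (1 − ρ/R)·(z − 𝐜) (internally tangent to 𝐒²_III at z), and similarly with primes. Then the Euclidean distance between the two centers is at least the sum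 ρ + ρ' of the two radii (the horospheres are tangent or disjoint), with equality (tangency) if and only if ab' + ac' + ad' + ba' + bc' + bd' + ca' + cb' + cd' + da' + db' + dc' = 1. -/
/-!
Write `u = z - 𝐜` and `u' = z' - 𝐜`; both have length `R`, so the centers `𝐜 + λu` and
`𝐜 + λ'u'` satisfy `‖λu - λ'u'‖² = R²(λ - λ')² + λλ'‖z - z'‖²`. For `z = x / h` with `x` integral,
`h = ∑ xᵢ` and `∑ xᵢ² = h²` (and likewise `z'`), `‖z - z'‖² = 2T / (hh')` where
`T = hh' - ⟨x, x'⟩ = ∑_{i ≠ j} xᵢx'ⱼ` is an integer, hence `T ≥ 1` as `z ≠ z'`. For the horosphere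
radii this gives `dist² = (ρ + ρ')² + 12 (T - 1) / ((2 + √6h)(2 + √6h'))`.
-/

open Real RealInnerProductSpace

theorem norm_smul_sub_smul_sq_of_norm_eq {E : Type*} [NormedAddCommGroup E]
    [InnerProductSpace ℝ E] {u v : E} (huv : ‖u‖ = ‖v‖) (s t : ℝ) :
    ‖s • u - t • v‖ ^ 2 = ‖u‖ ^ 2 * (s - t) ^ 2 + s * t * ‖u - v‖ ^ 2 := by
  rw [norm_sub_sq_real, norm_sub_sq_real, norm_smul, norm_smul, real_inner_smul_left,
    real_inner_smul_right, Real.norm_eq_abs, Real.norm_eq_abs, mul_pow, mul_pow, sq_abs, sq_abs,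
    ← huv]
  ring

theorem le_and_eq_iff_of_sq_eq_sq_add_mul {D r k m : ℝ} (hD : 0 ≤ D) (hr : 0 ≤ r) (hk : 0 < k)
    (hm : 0 ≤ m) (hsq : D ^ 2 = r ^ 2 + k * m) : r ≤ D ∧ (D = r ↔ m = 0) := by
  refine ⟨(sq_le_sq₀ hr hD).1 (by nlinarith [mul_nonneg hk.le hm]), fun hDr => ?_, fun hm0 => ?_⟩
  · subst hDr
    simpa [hk.ne'] using hsq
  · rwa [hm0, mul_zero, add_zero, sq_eq_sq₀ hD hr] at hsq

section UnitSphereInHyperplane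

variable {n : ℕ}

theorem norm_sub_sq_of_sum_eq_one {z c : EuclideanSpace ℝ (Fin n)} (hc : ∀ i, c i = 1 / n)
    (hsum : ∑ i, z i = 1) (hz : ‖z‖ = 1) : ‖z - c‖ ^ 2 = 1 - 1 / n := by
  have hn : n ≠ 0 := by
    rintro rfl
    simp at hsum
  have hzc : ⟪z, c⟫ = 1 / n := by
    simp only [PiLp.inner_apply, hc, RCLike.inner_apply, conj_trivial, ← Finset.mul_sum, hsum,
      mul_one]
  have hcc : ‖c‖ ^ 2 = 1 / n := by
    rw [← real_inner_self_eq_norm_sq]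
    simp only [PiLp.inner_apply, hc, RCLike.inner_apply, conj_trivial, Finset.sum_const,
      Finset.card_univ, Fintype.card_fin, nsmul_eq_mul]
    field_simp
  rw [norm_sub_sq_real, hz, hzc, hcc]
  ring

def tangencyForm (x x' : Fin n → ℤ) : ℤ := (∑ i, x i) * (∑ i, x' i) - ∑ i, x i * x' i

structure IsIntegralRepr (z : EuclideanSpace ℝ (Fin n)) (x : Fin n → ℤ) (h : ℤ) : Prop where
  pos : 0 < h
  sum_eq : ∑ i, x i = h
  sum_sq_eq : ∑ i, x i ^ 2 = h ^ 2
  apply_eq : ∀ i, z i = x i / h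

variable {x x' : Fin n → ℤ} {h h' : ℤ} {z z' : EuclideanSpace ℝ (Fin n)}

theorem inner_eq_sum_mul_div (hz : ∀ i, z i = x i / h) (hz' : ∀ i, z' i = x' i / h') :
    ⟪z, z'⟫ = (∑ i, x i * x' i : ℤ) / (h * h') := by
  simp only [PiLp.inner_apply, hz, hz', Int.cast_sum, Int.cast_mul, Finset.sum_div,
    RCLike.inner_apply, conj_trivial]
  exact Finset.sum_congr rfl fun i _ => by rw [div_mul_div_comm]; ring

namespace IsIntegralRepr

theorem sum_eq_one (hz : IsIntegralRepr z x h) : ∑ i, z i = 1 := by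
  simp only [hz.apply_eq, ← Finset.sum_div, ← Int.cast_sum, hz.sum_eq]
  exact div_self (by exact_mod_cast hz.pos.ne')

theorem norm_eq_one (hz : IsIntegralRepr z x h) : ‖z‖ = 1 := by
  have hh : (h : ℝ) ≠ 0 := by exact_mod_cast hz.pos.ne'
  have hsq : ‖z‖ ^ 2 = 1 := by
    rw [← real_inner_self_eq_norm_sq, inner_eq_sum_mul_div hz.apply_eq hz.apply_eq]
    simp only [← sq, hz.sum_sq_eq, Int.cast_pow]
    exact div_self (pow_ne_zero 2 hh)
  exact (pow_eq_one_iff_of_nonneg (norm_nonneg z) two_ne_zero).1 hsq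

theorem norm_sub_sq (hz : IsIntegralRepr z x h) (hz' : IsIntegralRepr z' x' h') :
    ‖z - z'‖ ^ 2 = 2 * tangencyForm x x' / (h * h') := by
  have hh : (h : ℝ) ≠ 0 := by exact_mod_cast hz.pos.ne'
  have hh' : (h' : ℝ) ≠ 0 := by exact_mod_cast hz'.pos.ne'
  rw [norm_sub_sq_real, hz.norm_eq_one, hz'.norm_eq_one,
    inner_eq_sum_mul_div hz.apply_eq hz'.apply_eq, tangencyForm, hz.sum_eq, hz'.sum_eq]
  field_simp
  push_cast
  ring

theorem one_le_tangencyForm (hz : IsIntegralRepr z x h) (hz' : IsIntegralRepr z' x' h')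
    (hne : z ≠ z') : 1 ≤ tangencyForm x x' := by
  have hpos : (0 : ℝ) < 2 * tangencyForm x x' / (h * h') := by
    rw [← hz.norm_sub_sq hz']
    exact pow_pos (norm_pos_iff.2 (sub_ne_zero.2 hne)) 2
  have hh : (0 : ℝ) < h * h' := by exact_mod_cast mul_pos hz.pos hz'.pos
  have : (0 : ℝ) < tangencyForm x x' := by
    linarith [(div_pos_iff_of_pos_right hh).1 hpos]
  exact_mod_cast this

end IsIntegralRepr

end UnitSphereInHyperplane

theorem tangencyForm_fin_four (a b c d a' b' c' d' : ℤ) :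
    tangencyForm ![a, b, c, d] ![a', b', c', d'] = a * b' + a * c' + a * d' + b * a' + b * c'
      + b * d' + c * a' + c * b' + c * d' + d * a' + d * b' + d * c' := by
  simp only [tangencyForm, Fin.sum_univ_four, Matrix.cons_val]
  ring

theorem isIntegralRepr_fin_four {z : EuclideanSpace ℝ (Fin 4)} {a b c d h : ℤ}
    (hh : h = a + b + c + d) (hpos : 0 < h) (hsq : a ^ 2 + b ^ 2 + c ^ 2 + d ^ 2 = h ^ 2)
    (hz0 : z 0 = (a : ℝ) / h) (hz1 : z 1 = (b : ℝ) / h) (hz2 : z 2 = (c : ℝ) / h)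
    (hz3 : z 3 = (d : ℝ) / h) : IsIntegralRepr z ![a, b, c, d] h where
  pos := hpos
  sum_eq := by simp [Fin.sum_univ_four, hh]
  sum_sq_eq := by simp [Fin.sum_univ_four, hsq]
  apply_eq i := by fin_cases i <;> simpa

theorem horosphere_center_dist_sq_identity {h h' T ρ ρ' : ℝ} (hh : 0 < h) (hh' : 0 < h')
    (hρ : ρ = √3 / (2 + √6 * h)) (hρ' : ρ' = √3 / (2 + √6 * h')) :
    3 / 4 * ((1 - ρ / (√3 / 2)) - (1 - ρ' / (√3 / 2))) ^ 2
        + (1 - ρ / (√3 / 2)) * (1 - ρ' / (√3 / 2)) * (2 * T / (h * h'))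
      = (ρ + ρ') ^ 2 + 12 / ((2 + √6 * h) * (2 + √6 * h')) * (T - 1) := by
  have h3 : √3 ^ 2 = 3 := sq_sqrt (by norm_num)
  have h6 : √6 ^ 2 = 6 := sq_sqrt (by norm_num)
  have : 0 < √3 := by positivity
  have : 0 < 2 + √6 * h := by positivity
  have : 0 < 2 + √6 * h' := by positivity
  subst hρ hρ'
  field_simp
  rw [h3]
  linear_combination 8 * h * h' * T * ((2 + √6 * h) * (2 + √6 * h')) * h6

theorem horospheres_S2III_general (a b c d a' b' c' d' h h' : ℤ)
    (hh : h = a + b + c + d) (hh' : h' = a' + b' + c' + d')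
    (hpos : 1 ≤ h) (hpos' : 1 ≤ h')
    (hsq : a ^ 2 + b ^ 2 + c ^ 2 + d ^ 2 = h ^ 2)
    (hsq' : a' ^ 2 + b' ^ 2 + c' ^ 2 + d' ^ 2 = h' ^ 2)
    (z z' cc : EuclideanSpace ℝ (Fin 4))
    (hcc : ∀ i, cc i = 1 / 4)
    (hz0 : z 0 = (a : ℝ) / h) (hz1 : z 1 = (b : ℝ) / h)
    (hz2 : z 2 = (c : ℝ) / h) (hz3 : z 3 = (d : ℝ) / h)
    (hz0' : z' 0 = (a' : ℝ) / h') (hz1' : z' 1 = (b' : ℝ) / h')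
    (hz2' : z' 2 = (c' : ℝ) / h') (hz3' : z' 3 = (d' : ℝ) / h')
    (hne : z ≠ z')
    (ρ ρ' : ℝ) (hρ : ρ = Real.sqrt 3 / (2 + Real.sqrt 6 * h))
    (hρ' : ρ' = Real.sqrt 3 / (2 + Real.sqrt 6 * h')) :
    ρ + ρ' ≤ dist (cc + (1 - ρ / (Real.sqrt 3 / 2)) • (z - cc))
        (cc + (1 - ρ' / (Real.sqrt 3 / 2)) • (z' - cc)) ∧
    (dist (cc + (1 - ρ / (Real.sqrt 3 / 2)) • (z - cc))
          (cc + (1 - ρ' / (Real.sqrt 3 / 2)) • (z' - cc)) = ρ + ρ' ↔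
      a * b' + a * c' + a * d' + b * a' + b * c' + b * d' + c * a' + c * b' + c * d'
          + d * a' + d * b' + d * c' = 1) := by
  have hz := isIntegralRepr_fin_four hh hpos hsq hz0 hz1 hz2 hz3
  have hz' := isIntegralRepr_fin_four hh' hpos' hsq' hz0' hz1' hz2' hz3'
  have hradius {w : EuclideanSpace ℝ (Fin 4)} {y : Fin 4 → ℤ} {k : ℤ} (hw : IsIntegralRepr w y k) :
      ‖w - cc‖ ^ 2 = 3 / 4 := by
    rw [norm_sub_sq_of_sum_eq_one (by simpa using hcc) hw.sum_eq_one hw.norm_eq_one]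
    norm_num
  set T := tangencyForm ![a, b, c, d] ![a', b', c', d']
  have hdist :
      dist (cc + (1 - ρ / (√3 / 2)) • (z - cc)) (cc + (1 - ρ' / (√3 / 2)) • (z' - cc)) ^ 2 =
        (ρ + ρ') ^ 2 + 12 / ((2 + √6 * h) * (2 + √6 * h')) * (T - 1) := by
    have hnorm : ‖z - cc‖ = ‖z' - cc‖ := by
      rw [← sq_eq_sq₀ (norm_nonneg _) (norm_nonneg _), hradius hz, hradius hz']
    rw [dist_eq_norm, add_sub_add_left_eq_sub, norm_smul_sub_smul_sq_of_norm_eq hnorm, hradius hz,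
      sub_sub_sub_cancel_right, hz.norm_sub_sq hz']
    exact horosphere_center_dist_sq_identity (by exact_mod_cast hz.pos) (by exact_mod_cast hz'.pos)
      hρ hρ'
  have hT1 : (1 : ℝ) ≤ T := mod_cast hz.one_le_tangencyForm hz' hne
  obtain ⟨hle, hiff⟩ := le_and_eq_iff_of_sq_eq_sq_add_mul dist_nonneg
    (by rw [hρ, hρ']; positivity) (by positivity) (sub_nonneg.2 hT1) hdist
  refine ⟨hle, hiff.trans ?_⟩
  rw [sub_eq_zero, ← tangencyForm_fin_four]
  exact_mod_cast Iff.rfl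

/-- Horosphere tangency on `𝐒²_III`.  Let `z = (a,b,c,d)/h` and `z' = (a',b',c',d')/h'`
be two distinct rational points of `𝐒²_III` (`gcd(a,b,c,d) = 1`, `h = a+b+c+d ≥ 1`,
`a²+b²+c²+d² = h²`, and similarly with primes).  With `𝐜 = (1/4,1/4,1/4,1/4)` and
`R = √3/2`, the horosphere at `z` has radius `ρ = √3/(2+√6·h)` and center
`𝐜 + (1 − ρ/R)·(z − 𝐜)`.  Then the distance between the two centers is at least
`ρ + ρ'`, with equality (tangency) if and only if
`ab' + ac' + ad' + ba' + bc' + bd' + ca' + cb' + cd' + da' + db' + dc' = 1`. -/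
theorem horospheres_S2III (a b c d a' b' c' d' h h' : ℤ)
    (hh : h = a + b + c + d) (hh' : h' = a' + b' + c' + d')
    (hpos : 1 ≤ h) (hpos' : 1 ≤ h')
    (hsq : a ^ 2 + b ^ 2 + c ^ 2 + d ^ 2 = h ^ 2)
    (hsq' : a' ^ 2 + b' ^ 2 + c' ^ 2 + d' ^ 2 = h' ^ 2)
    (hgcd : Int.gcd (Int.gcd (Int.gcd a b) c) d = 1)
    (hgcd' : Int.gcd (Int.gcd (Int.gcd a' b') c') d' = 1)
    (z z' cc : EuclideanSpace ℝ (Fin 4))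
    (hcc : ∀ i, cc i = 1 / 4)
    (hz0 : z 0 = (a : ℝ) / h) (hz1 : z 1 = (b : ℝ) / h)
    (hz2 : z 2 = (c : ℝ) / h) (hz3 : z 3 = (d : ℝ) / h)
    (hz0' : z' 0 = (a' : ℝ) / h') (hz1' : z' 1 = (b' : ℝ) / h')
    (hz2' : z' 2 = (c' : ℝ) / h') (hz3' : z' 3 = (d' : ℝ) / h')
    (hne : z ≠ z')
    (ρ ρ' : ℝ) (hρ : ρ = Real.sqrt 3 / (2 + Real.sqrt 6 * h))
    (hρ' : ρ' = Real.sqrt 3 / (2 + Real.sqrt 6 * h')) :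
    ρ + ρ' ≤ dist (cc + (1 - ρ / (Real.sqrt 3 / 2)) • (z - cc))
        (cc + (1 - ρ' / (Real.sqrt 3 / 2)) • (z' - cc)) ∧
    (dist (cc + (1 - ρ / (Real.sqrt 3 / 2)) • (z - cc))
          (cc + (1 - ρ' / (Real.sqrt 3 / 2)) • (z' - cc)) = ρ + ρ' ↔
      a * b' + a * c' + a * d' + b * a' + b * c' + b * d' + c * a' + c * b' + c * d'
          + d * a' + d * b' + d * c' = 1) :=
  horospheres_S2III_general a b c d a' b' c' d' h h' hh hh' hpos hpos' hsq hsq' z z' cc hcc hz0 hz1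
    hz2 hz3 hz0' hz1' hz2' hz3' hne ρ ρ' hρ hρ'
end

section
/- Let α, β be elements of ℤ[i] with β ≠ 0 that generate the unit ideal of ℤ[i], and define integers a, b by a + bi = α·β̄. Set q = |α|² + |β|² − a − b. Then q ≥ 1, the point ((a−b)/q, (a+b−|β|²)/q, (|α|²−a−b)/q) lies on 𝐒²_I = {(x₁,x₂,x₃) ∈ ℝ³ : x₁²+x₂²+x₃² = 1}, and gcd(a−b, a+b−|β|², |α|²−a−b, q) = 1; consequently this rational point of 𝐒²_I has height q = |α|² + |β|² − a − b. -/
/-- The sphere `𝐒²_I = {(x₁,x₂,x₃) ∈ ℝ³ : x₁² + x₂² + x₃² = 1}`. -/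
def S2I : Set (EuclideanSpace ℝ (Fin 3)) := {v | v 0 ^ 2 + v 1 ^ 2 + v 2 ^ 2 = 1}

namespace GaussianInt

theorem norm_add (x y : GaussianInt) :
    Zsqrtd.norm (x + y) = Zsqrtd.norm x + Zsqrtd.norm y + 2 * (x * star y).re := by
  simp only [Zsqrtd.norm_def, Zsqrtd.re_add, Zsqrtd.im_add, Zsqrtd.re_mul, Zsqrtd.re_star,
    Zsqrtd.im_star]
  ring

theorem two_mul_norm_add_norm_sub_re_sub_im (x y : GaussianInt) :
    2 * (Zsqrtd.norm x + Zsqrtd.norm y - (x * star y).re - (x * star y).im) =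
      Zsqrtd.norm (x - y) + Zsqrtd.norm (x - Zsqrtd.sqrtd * y) := by
  simp only [Zsqrtd.norm_def, Zsqrtd.re_sub, Zsqrtd.im_sub, Zsqrtd.re_mul, Zsqrtd.im_mul,
    Zsqrtd.re_star, Zsqrtd.im_star, Zsqrtd.re_sqrtd, Zsqrtd.im_sqrtd]
  ring

theorem norm_add_norm_sub_re_sub_im_pos (x : GaussianInt) {y : GaussianInt} (hy : y ≠ 0) :
    0 < Zsqrtd.norm x + Zsqrtd.norm y - (x * star y).re - (x * star y).im := by
  by_contra! hle
  have h₁ := norm_nonneg (x - y)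
  have h₂ := norm_nonneg (x - Zsqrtd.sqrtd * y)
  have hxy : x - y = 0 := norm_eq_zero.mp (by linarith [two_mul_norm_add_norm_sub_re_sub_im x y])
  have hxiy : x - Zsqrtd.sqrtd * y = 0 :=
    norm_eq_zero.mp (by linarith [two_mul_norm_add_norm_sub_re_sub_im x y])
  apply hy
  have hy' : (1 - Zsqrtd.sqrtd) * y = 0 := by linear_combination hxiy - hxy
  refine (mul_eq_zero.mp hy').resolve_left fun h => ?_
  simpa using congrArg Zsqrtd.re h

theorem exists_norm_combination_eq_one_of_isCoprime {x y : GaussianInt} (h : IsCoprime x y) :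
    ∃ k l s t : ℤ, k * Zsqrtd.norm x + l * Zsqrtd.norm y +
      2 * (s * (x * star y).re - t * (x * star y).im) = 1 := by
  obtain ⟨γ, δ, hγδ⟩ := h
  refine ⟨Zsqrtd.norm γ, Zsqrtd.norm δ, (γ * star δ).re, (γ * star δ).im, ?_⟩
  have hnorm := norm_add (γ * x) (δ * y)
  rw [hγδ, Zsqrtd.norm_one, Zsqrtd.norm_mul, Zsqrtd.norm_mul] at hnorm
  have hre : (γ * x * star (δ * y)).re =
      (γ * star δ).re * (x * star y).re - (γ * star δ).im * (x * star y).im := by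
    rw [star_mul, show γ * x * (star y * star δ) = γ * star δ * (x * star y) by ring,
      Zsqrtd.re_mul]
    ring
  linear_combination -hnorm - 2 * hre

end GaussianInt

theorem Rat.lcm_den_intCast_div_eq_natAbs {ι : Type*} [Fintype ι] (p : ι → ℤ) {q : ℤ}
    (hq : q ≠ 0) (c : ι → ℤ) (c₀ : ℤ) (hc : ∑ i, c i * p i + c₀ * q = 1) :
    Finset.univ.lcm (fun i => ((p i / q : ℚ)).den) = q.natAbs := by
  set L := Finset.univ.lcm fun i => ((p i / q : ℚ)).den
  have hden_dvd (i : ι) : ((p i / q : ℚ)).den ∣ q.natAbs := by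
    rw [← Int.ofNat_dvd_left, ← Rat.divInt_eq_div]
    exact Rat.den_dvd _ _
  have hq_dvd (i : ι) : q ∣ p i * L := by
    have h := Rat.mul_den_eq_num (p i / q : ℚ)
    rw [div_mul_eq_mul_div, div_eq_iff (by exact_mod_cast hq)] at h
    have h' : p i * ((p i / q : ℚ)).den = ((p i / q : ℚ)).num * q := by exact_mod_cast h
    exact (Dvd.intro_left _ h'.symm).trans <| mul_dvd_mul_left _ <|
      Int.natCast_dvd_natCast.mpr (Finset.dvd_lcm (Finset.mem_univ i))
  refine Nat.dvd_antisymm (Finset.lcm_dvd fun i _ => hden_dvd i) ?_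
  have hL : (L : ℤ) = ∑ i, c i * (p i * L) + c₀ * L * q := by
    simp_rw [← mul_assoc, ← Finset.sum_mul]
    linear_combination -(L : ℤ) * hc
  have : q ∣ (L : ℤ) := hL ▸ dvd_add (Finset.dvd_sum fun i _ => (hq_dvd i).mul_left _)
    (dvd_mul_left _ _)
  simpa using Int.natAbs_dvd_natAbs.mpr this

theorem heightVec_eq_lcm_den {l : ℕ} (v : EuclideanSpace ℝ (Fin l)) (r : Fin l → ℚ)
    (hv : ∀ i, v i = r i) : heightVec v = (Finset.univ.lcm fun i => (r i).den : ℕ) := by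
  have h : ∀ i, ∃ q : ℚ, v i = q := fun i => ⟨r i, hv i⟩
  rw [heightVec, dif_pos h]
  congr 3 with i
  rw [Rat.cast_injective ((h i).choose_spec.symm.trans (hv i))]

theorem mem_ratPts_and_heightVec_eq_of_bezout {l : ℕ} (p : Fin l → ℤ) {q : ℤ} (hq : 0 < q)
    (c : Fin l → ℤ) (c₀ : ℤ) (hc : ∑ i, c i * p i + c₀ * q = 1)
    (v : EuclideanSpace ℝ (Fin l)) (hv : ∀ i, v i = (p i : ℝ) / q) :
    v ∈ ratPts l ∧ heightVec v = q := by
  have hv' (i : Fin l) : v i = ((p i / q : ℚ) : ℝ) := by push_cast; exact hv i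
  refine ⟨fun i => ⟨_, hv' i⟩, ?_⟩
  rw [heightVec_eq_lcm_den v _ hv', Rat.lcm_den_intCast_div_eq_natAbs p hq.ne' c c₀ hc]
  rw [Nat.cast_natAbs, Int.cast_abs, abs_of_pos (by exact_mod_cast hq)]

theorem Int.gcd_gcd_gcd_eq_one_of_combination {x y z w : ℤ} (c₁ c₂ c₃ c₄ : ℤ)
    (h : c₁ * x + c₂ * y + c₃ * z + c₄ * w = 1) :
    Int.gcd (Int.gcd (Int.gcd x y) z) w = 1 := by
  set g := Int.gcd (Int.gcd (Int.gcd x y) z) w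
  have hxyz : (g : ℤ) ∣ Int.gcd (Int.gcd x y) z := Int.gcd_dvd_left _ _
  have hxy : (g : ℤ) ∣ Int.gcd x y := hxyz.trans (Int.gcd_dvd_left _ _)
  have hx : (g : ℤ) ∣ x := hxy.trans (Int.gcd_dvd_left _ _)
  have hy : (g : ℤ) ∣ y := hxy.trans (Int.gcd_dvd_right _ _)
  have hz : (g : ℤ) ∣ z := hxyz.trans (Int.gcd_dvd_right _ _)
  have hw : (g : ℤ) ∣ w := Int.gcd_dvd_right _ _
  have hg : (g : ℤ) ∣ 1 :=
    h ▸ (((hx.mul_left _).add (hy.mul_left _)).add (hz.mul_left _)).add (hw.mul_left _)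
  exact Nat.dvd_one.mp (Int.natCast_dvd_natCast.mp hg)

/-- Heights of rational points of `𝐒²_I` coming from `ℚ(i)`.  Let `α, β ∈ ℤ[i]`,
`β ≠ 0`, generate the unit ideal, put `a + bi = α·β̄` and `q = |α|² + |β|² − a − b`.
Then `q ≥ 1`, the point `((a−b)/q, (a+b−|β|²)/q, (|α|²−a−b)/q)` lies on `𝐒²_I`,
`gcd(a−b, a+b−|β|², |α|²−a−b, q) = 1`, and this rational point has height `q`. -/
theorem height_S2I_point (α β : GaussianInt) (hβ : β ≠ 0) (hco : IsCoprime α β)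
    (a b q : ℤ) (ha : a = (α * star β).re) (hb : b = (α * star β).im)
    (hq : q = Zsqrtd.norm α + Zsqrtd.norm β - a - b) :
    1 ≤ q ∧
    Int.gcd (Int.gcd (Int.gcd (a - b) (a + b - Zsqrtd.norm β)) (Zsqrtd.norm α - a - b))
      q = 1 ∧
    ∀ v : EuclideanSpace ℝ (Fin 3),
      v 0 = ((a - b : ℤ) : ℝ) / (q : ℝ) →
      v 1 = ((a + b - Zsqrtd.norm β : ℤ) : ℝ) / (q : ℝ) →
      v 2 = ((Zsqrtd.norm α - a - b : ℤ) : ℝ) / (q : ℝ) →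
      v ∈ S2I ∩ ratPts 3 ∧ heightVec v = (q : ℝ) := by
  have hq_pos : 0 < q := hq ▸ ha ▸ hb ▸ GaussianInt.norm_add_norm_sub_re_sub_im_pos α hβ
  obtain ⟨k, l, s, t, hkl⟩ := GaussianInt.exists_norm_combination_eq_one_of_isCoprime hco
  rw [← ha, ← hb] at hkl
  -- `|α|² = q + (a + b - |β|²)`, `|β|² = q - (|α|² - a - b)`, and `2a`, `2b` are sums of these.
  have hbez : (s + t) * (a - b) + (k + s - t) * (a + b - Zsqrtd.norm β) +
      (-l - s + t) * (Zsqrtd.norm α - a - b) + (k + l + s - t) * q = 1 := by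
    rw [hq]; linear_combination hkl
  refine ⟨hq_pos, Int.gcd_gcd_gcd_eq_one_of_combination _ _ _ _ hbez, fun v h₀ h₁ h₂ => ?_⟩
  obtain ⟨hrat, hheight⟩ := mem_ratPts_and_heightVec_eq_of_bezout
    ![a - b, a + b - Zsqrtd.norm β, Zsqrtd.norm α - a - b] hq_pos ![s + t, k + s - t, -l - s + t]
    (k + l + s - t) (by simpa [Fin.sum_univ_three] using hbez) v
    (fun i => by fin_cases i <;> assumption)
  refine ⟨⟨?_, hrat⟩, hheight⟩
  have hab : a ^ 2 + b ^ 2 = Zsqrtd.norm α * Zsqrtd.norm β := by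
    have h := Zsqrtd.norm_mul α (star β)
    rw [Zsqrtd.norm_conj, Zsqrtd.norm_def, ← ha, ← hb] at h
    linear_combination h
  have hsum :
      (a - b) ^ 2 + (a + b - Zsqrtd.norm β) ^ 2 + (Zsqrtd.norm α - a - b) ^ 2 = q ^ 2 := by
    rw [hq]; linear_combination 2 * hab
  have hq_ne : (q : ℝ) ≠ 0 := by positivity
  show v 0 ^ 2 + v 1 ^ 2 + v 2 ^ 2 = 1
  rw [h₀, h₁, h₂]
  field_simp
  exact_mod_cast hsum
end
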